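/- arXiv:1608.01528 — 2 statements merged into one kernel-verified Lean document; each statement's English description precedes it below -/
import Mathlib

section
/- Consider the tripartite scenario where parties A_1, A_2, A_3 have binary inputs x_1, x_2, x_3 ∈ {0,1}, party A_1 has a single fixed output, and parties A_2, A_3 have binary outputs a_2, a_3 ∈ {0,1}. For 0 < q_0, q_1 < 1 with q_0 ≠ q_1, the correlation P(a_2,a_3|x_1,x_2,x_3) = δ_{x_1,0}·(q_0·δ_{a_2,0}·δ_{a_3,x_2} + (1−q_0)·δ_{a_2,x_3}·δ_{a_3,0}) + δ_{x_1,1}·(q_1·δ_{a_2,0}·δ_{a_3,x_2} + (1−q_1)·δ_{a_2,x_3}·δ_{a_3,0}) is causal, but it cannot be written as a convex combination of causal correlations each of which is compatible with a fixed causal order (i.e., it is not a probabilistic mixture of fixed-order causal correlations). -/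
/-
`P9` is causal: `A_1` acts first, and given `x_1` the remaining correlation is the mixture, with
weight `q_{x_1}`, of "`A_2` outputs `0`, then `A_3` outputs `x_2`" and "`A_3` outputs `0`, then
`A_2` outputs `x_3`"; causal correlations form a convex set.

It is no mixture of fixed-order correlations: in a component where `A_2` precedes `A_3`, only the
output-less `A_1` can come after `A_3`, so the marginal of `a_2` does not depend on `x_3`, and
symmetrically otherwise. As `P(a_3 = 1)` vanishes at `x_2 = 0` and `P(a_2 = 1)` at `x_3 = 0`, this
forces `q_{x_1}` to be the total weight of the components in which `A_2` precedes `A_3`, whatever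
`x_1` is, contradicting `q_0 ≠ q_1`.
-/

/-- A correlation for the parties in the finite set `S`, where party `i` has input set `X i`
and output set `A i`: a real number `P x a` for each assignment of inputs `x` and outputs `a`
for the parties in `S`. -/
def Corr {ι : Type} (X A : ι → Type) (S : Finset ι) : Type :=
  ((i : {j // j ∈ S}) → X i.1) → ((i : {j // j ∈ S}) → A i.1) → ℝ

/-- `p` is a probability distribution on the finite type `α`. -/
def IsProbDist {α : Type} [Fintype α] (p : α → ℝ) : Prop :=
  (∀ a, 0 ≤ p a) ∧ ∑ a, p a = 1

/-- Restriction of a tuple indexed by `S` to a subset `T ⊆ S`. -/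
def restr {ι : Type} {X : ι → Type} {S T : Finset ι} (h : T ⊆ S)
    (x : (i : {j // j ∈ S}) → X i.1) : (i : {j // j ∈ T}) → X i.1 :=
  fun i => x ⟨i.1, h i.2⟩

theorem erase_sub {ι : Type} [DecidableEq ι] (S : Finset ι) (k : ι) : S.erase k ⊆ S :=
  fun _ hi => Finset.mem_of_mem_erase hi

theorem sdiff_sub {ι : Type} [DecidableEq ι] (S K : Finset ι) : S \ K ⊆ S :=
  fun _ hi => (Finset.mem_sdiff.mp hi).1

/-- Combine a tuple on `K` and a tuple on `S \ K` into a tuple on `S`. -/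
def glue {ι : Type} [DecidableEq ι] {X : ι → Type} {S K : Finset ι} (_ : K ⊆ S)
    (u : (i : {j // j ∈ K}) → X i.1) (v : (i : {j // j ∈ S \ K}) → X i.1) :
    (i : {j // j ∈ S}) → X i.1 :=
  fun i => if h : i.1 ∈ K then u ⟨i.1, h⟩ else v ⟨i.1, Finset.mem_sdiff.mpr ⟨i.2, h⟩⟩

/-- Insert a value for party `k` into a tuple on `S.erase k`, giving a tuple on `S`. -/
def ins {ι : Type} [DecidableEq ι] {X : ι → Type} {S : Finset ι} {k : ι} (_ : k ∈ S)
    (xk : X k) (u : (i : {j // j ∈ S.erase k}) → X i.1) : (i : {j // j ∈ S}) → X i.1 :=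
  fun i => if h : i.1 = k then cast (congrArg X h.symm) xk
    else u ⟨i.1, Finset.mem_erase.mpr ⟨h, i.2⟩⟩

/-- Causal correlations, defined by induction on the number of parties: any single-party
probability distribution is causal; a correlation on a set `S` of at least two parties is
causal iff it is a convex combination, over choices of a party `k ∈ S` acting first, of
products of a single-party distribution for `k` with causal correlations for the remaining
parties `S.erase k` that may depend on the input and output of party `k`. -/
inductive IsCausal {ι : Type} [DecidableEq ι] (X A : ι → Type) [∀ i, Fintype (A i)] :
    (S : Finset ι) → Corr X A S → Prop
  | base (k : ι) (P : Corr X A {k}) (hP : ∀ x, IsProbDist (P x)) : IsCausal X A {k} P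
  | step (S : Finset ι) (hS : 2 ≤ S.card) (P : Corr X A S)
      (q : {j // j ∈ S} → ℝ)
      (Pfirst : (k : {j // j ∈ S}) → X k.1 → A k.1 → ℝ)
      (Prest : (k : {j // j ∈ S}) → X k.1 → A k.1 → Corr X A (S.erase k.1))
      (hq : ∀ k, 0 ≤ q k)
      (hq1 : ∑ k ∈ S.attach, q k = 1)
      (hPfirst : ∀ k xk, IsProbDist (Pfirst k xk))
      (hPrest : ∀ k xk ak, IsCausal X A (S.erase k.1) (Prest k xk ak))
      (hP : ∀ x a, P x a = ∑ k ∈ S.attach, q k * Pfirst k (x k) (a k) *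
            Prest k (x k) (a k) (restr (erase_sub S k.1) x) (restr (erase_sub S k.1) a)) :
      IsCausal X A S P

/-- The output sets for the tripartite scenario of Eq. (8) of the paper: party `A_1` has a
single fixed output (`Unit`), parties `A_2` and `A_3` have binary outputs. -/
def A9 : Fin 3 → Type
  | ⟨0, _⟩ => Unit
  | ⟨1, _⟩ => Bool
  | ⟨_ + 2, _⟩ => Bool

instance A9.instFintype : (i : Fin 3) → Fintype (A9 i)
  | ⟨0, _⟩ => inferInstanceAs (Fintype Unit)
  | ⟨1, _⟩ => inferInstanceAs (Fintype Bool)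
  | ⟨_ + 2, _⟩ => inferInstanceAs (Fintype Bool)

instance A9.instDecidableEq : (i : Fin 3) → DecidableEq (A9 i)
  | ⟨0, _⟩ => inferInstanceAs (DecidableEq Unit)
  | ⟨1, _⟩ => inferInstanceAs (DecidableEq Bool)
  | ⟨_ + 2, _⟩ => inferInstanceAs (DecidableEq Bool)

/-- A correlation is compatible with the fixed causal order
`A_{σ(1)} ≺ A_{σ(2)} ≺ … ≺ A_{σ(N)}` if it factorizes as a product of conditional
distributions, where the output of the `j`-th party in the order may depend only on the
inputs of the first `j` parties and the outputs of the first `j - 1` parties. -/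
def CompatibleWithOrder {N : ℕ} (X A : Fin N → Type) [∀ i, Fintype (A i)]
    (σ : Equiv.Perm (Fin N)) (P : Corr X A Finset.univ) : Prop :=
  ∃ Pc : (j : Fin N) → ((i : Fin N) → i ≤ j → X (σ i)) → ((i : Fin N) → i < j → A (σ i)) →
      A (σ j) → ℝ,
    (∀ j xs as aj, 0 ≤ Pc j xs as aj) ∧
    (∀ j xs as, ∑ aj, Pc j xs as aj = 1) ∧
    (∀ x a, P x a = ∏ j, Pc j (fun i _ => x ⟨σ i, Finset.mem_univ _⟩)
        (fun i _ => a ⟨σ i, Finset.mem_univ _⟩) (a ⟨σ j, Finset.mem_univ _⟩))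

instance A9.instDecidableEqBool1 (a : A9 1) (b : Bool) : Decidable (a = b) :=
  A9.instDecidableEq 1 a b

instance A9.instDecidableEqBool2 (a : A9 2) (b : Bool) : Decidable (a = b) :=
  A9.instDecidableEq 2 a b

/-- The correlation of Eq. (8): `P(a_2, a_3 | x_1, x_2, x_3)
= δ_{x_1,0} (q_0 δ_{a_2,0} δ_{a_3,x_2} + (1 - q_0) δ_{a_2,x_3} δ_{a_3,0})
+ δ_{x_1,1} (q_1 δ_{a_2,0} δ_{a_3,x_2} + (1 - q_1) δ_{a_2,x_3} δ_{a_3,0})`,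
encoding `0` as `false` and `1` as `true` (party 1 has no output). -/
def P9 (q0 q1 : ℝ) : Corr (fun _ : Fin 3 => Bool) A9 Finset.univ := fun x a =>
  if x ⟨0, Finset.mem_univ 0⟩ = false then
    q0 * (if a ⟨1, Finset.mem_univ 1⟩ = false ∧
            a ⟨2, Finset.mem_univ 2⟩ = x ⟨1, Finset.mem_univ 1⟩ then 1 else 0)
      + (1 - q0) * (if a ⟨1, Finset.mem_univ 1⟩ = x ⟨2, Finset.mem_univ 2⟩ ∧
            a ⟨2, Finset.mem_univ 2⟩ = false then 1 else 0)
  else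
    q1 * (if a ⟨1, Finset.mem_univ 1⟩ = false ∧
            a ⟨2, Finset.mem_univ 2⟩ = x ⟨1, Finset.mem_univ 1⟩ then 1 else 0)
      + (1 - q1) * (if a ⟨1, Finset.mem_univ 1⟩ = x ⟨2, Finset.mem_univ 2⟩ ∧
            a ⟨2, Finset.mem_univ 2⟩ = false then 1 else 0)

open Finset

section ProbDist

variable {α : Type} [Fintype α]

theorem isProbDist_uniform [Nonempty α] : IsProbDist (fun _ : α => (Fintype.card α : ℝ)⁻¹) :=
  ⟨fun _ => by positivity, by simp [card_univ]⟩

theorem isProbDist_ite_eq [DecidableEq α] (b : α) :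
    IsProbDist (fun c : α => if c = b then 1 else 0) :=
  ⟨fun _ => by positivity, by simp⟩

theorem IsProbDist.mix {p p' : α → ℝ} (hp : IsProbDist p) (hp' : IsProbDist p') {t : ℝ}
    (ht0 : 0 ≤ t) (ht1 : t ≤ 1) : IsProbDist (fun a => t * p a + (1 - t) * p' a) := by
  refine ⟨fun a => ?_, ?_⟩
  · have := hp.1 a; have := hp'.1 a; have : 0 ≤ 1 - t := by linarith
    positivity
  · rw [sum_add_distrib, ← mul_sum, ← mul_sum, hp.2, hp'.2]; ring

end ProbDist

section RelWeight

noncomputable def relWeight (u v : ℝ) : ℝ := if u + v = 0 then 1 else u / (u + v)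

variable {u v : ℝ}

theorem relWeight_nonneg (hu : 0 ≤ u) (hv : 0 ≤ v) : 0 ≤ relWeight u v := by
  unfold relWeight; split_ifs <;> positivity

theorem relWeight_le_one (hu : 0 ≤ u) (hv : 0 ≤ v) : relWeight u v ≤ 1 := by
  unfold relWeight
  split_ifs with h
  · rfl
  · exact div_le_one_of_le₀ (by linarith) (by positivity)

theorem add_mul_relWeight_mix (hu : 0 ≤ u) (hv : 0 ≤ v) (y y' : ℝ) :
    (u + v) * (relWeight u v * y + (1 - relWeight u v) * y') = u * y + v * y' := by
  unfold relWeight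
  split_ifs with h
  · obtain ⟨rfl, rfl⟩ : u = 0 ∧ v = 0 := ⟨by linarith, by linarith⟩
    simp
  · field_simp
    ring

end RelWeight

namespace IsCausal

variable {ι : Type} [DecidableEq ι] {X A : ι → Type} [∀ i, Fintype (A i)]

theorem of_eq_singleton {S : Finset ι} {k : ι} (hS : S = {k}) (hk : k ∈ S)
    (f : X k → A k → ℝ) (hf : ∀ x, IsProbDist (f x)) {P : Corr X A S}
    (hP : ∀ x a, P x a = f (x ⟨k, hk⟩) (a ⟨k, hk⟩)) : IsCausal X A S P := by
  subst hS
  refine .base k P fun x => ⟨fun a => hP x a ▸ (hf _).1 _, ?_⟩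
  simp_rw [hP]
  exact ((Equiv.piUnique (fun i : {j // j ∈ ({k} : Finset ι)} => A i.1)).sum_comp
    (f (x ⟨k, hk⟩))).trans (hf _).2

theorem isProbDist_of_card_eq_one {S : Finset ι} {P : Corr X A S} (h : IsCausal X A S P)
    (hS : S.card = 1) : ∀ x, IsProbDist (P x) := by
  cases h with
  | base k P hP => exact hP
  | step S hS2 => omega

theorem exists_decomposition {S : Finset ι} {P : Corr X A S} (h : IsCausal X A S P)
    (hS : 2 ≤ S.card) :
    ∃ (q : {j // j ∈ S} → ℝ) (Pfirst : (k : {j // j ∈ S}) → X k.1 → A k.1 → ℝ)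
      (Prest : (k : {j // j ∈ S}) → X k.1 → A k.1 → Corr X A (S.erase k.1)),
      (∀ k, 0 ≤ q k) ∧ ∑ k ∈ S.attach, q k = 1 ∧ (∀ k xk, IsProbDist (Pfirst k xk)) ∧
      (∀ k xk ak, IsCausal X A (S.erase k.1) (Prest k xk ak)) ∧
      ∀ x a, P x a = ∑ k ∈ S.attach, q k * Pfirst k (x k) (a k) *
        Prest k (x k) (a k) (restr (erase_sub S k.1) x) (restr (erase_sub S k.1) a) := by
  cases h with
  | base k P hP => simp at hS
  | step S _ P q Pfirst Prest hq hq1 hPfirst hPrest hP =>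
    exact ⟨q, Pfirst, Prest, hq, hq1, hPfirst, hPrest, hP⟩

theorem mix {S : Finset ι} {P P' : Corr X A S} (hP : IsCausal X A S P)
    (hP' : IsCausal X A S P') {t : ℝ} (ht0 : 0 ≤ t) (ht1 : t ≤ 1) :
    IsCausal X A S (fun x a => t * P x a + (1 - t) * P' x a) := by
  induction hP generalizing t with
  | base k P hP =>
    exact .base k _ fun x =>
      (hP x).mix (hP'.isProbDist_of_card_eq_one (card_singleton k) x) ht0 ht1
  | step S hS P q Pfirst Prest hq hq1 hPfirst hPrest hPeq ih =>
    obtain ⟨q', Pfirst', Prest', hq', hq1', hPfirst', hPrest', hPeq'⟩ :=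
      hP'.exists_decomposition hS
    have ht0' : 0 ≤ 1 - t := by linarith
    have hw k : 0 ≤ t * q k := mul_nonneg ht0 (hq k)
    have hw' k : 0 ≤ (1 - t) * q' k := mul_nonneg ht0' (hq' k)
    have hv k xk ak : 0 ≤ t * q k * Pfirst k xk ak := mul_nonneg (hw k) ((hPfirst k xk).1 ak)
    have hv' k xk ak : 0 ≤ (1 - t) * q' k * Pfirst' k xk ak :=
      mul_nonneg (hw' k) ((hPfirst' k xk).1 ak)
    -- Party `k` goes first with weight `t q k + (1 - t) q' k`; its output and the remaining
    -- correlation are mixed with the posterior weights given that output.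
    refine .step S hS _ (fun k => t * q k + (1 - t) * q' k)
      (fun k xk ak => relWeight (t * q k) ((1 - t) * q' k) * Pfirst k xk ak
        + (1 - relWeight (t * q k) ((1 - t) * q' k)) * Pfirst' k xk ak)
      (fun k xk ak y b =>
        relWeight (t * q k * Pfirst k xk ak) ((1 - t) * q' k * Pfirst' k xk ak) * Prest k xk ak y b
        + (1 - relWeight (t * q k * Pfirst k xk ak) ((1 - t) * q' k * Pfirst' k xk ak))
          * Prest' k xk ak y b)
      (fun k => add_nonneg (hw k) (hw' k)) ?_
      (fun k xk => (hPfirst k xk).mix (hPfirst' k xk) (relWeight_nonneg (hw k) (hw' k))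
        (relWeight_le_one (hw k) (hw' k)))
      (fun k xk ak => ih k xk ak (hPrest' k xk ak) (relWeight_nonneg (hv k xk ak) (hv' k xk ak))
        (relWeight_le_one (hv k xk ak) (hv' k xk ak))) ?_
    · rw [sum_add_distrib, ← mul_sum, ← mul_sum, hq1, hq1']; ring
    · intro x a
      simp only [hPeq, hPeq', mul_sum, ← sum_add_distrib]
      refine sum_congr rfl fun k _ => ?_
      rw [add_mul_relWeight_mix (hw k) (hw' k), add_mul_relWeight_mix (hv k _ _) (hv' k _ _)]
      ring

variable [∀ i, Nonempty (A i)]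

theorem exists_of_nonempty {S : Finset ι} (hS : S.Nonempty) : ∃ P, IsCausal X A S P := by
  induction S using strongInduction with | H S ih => ?_
  obtain hcard | hcard : S.card = 1 ∨ 2 ≤ S.card := by
    have := hS.card_pos; omega
  · obtain ⟨k, rfl⟩ := card_eq_one.mp hcard
    exact ⟨_, of_eq_singleton rfl (mem_singleton_self k) _ (fun _ => isProbDist_uniform)
      fun _ _ => rfl⟩
  · have hrest (k : {j // j ∈ S}) : ∃ P, IsCausal X A (S.erase k.1) P :=
      ih _ (erase_ssubset k.2) (by rw [← card_pos, card_erase_of_mem k.2]; omega)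
    choose Prest hPrest using hrest
    have hcard' : (S.card : ℝ) ≠ 0 := by positivity
    exact ⟨_, .step S hcard _ (fun _ => (S.card : ℝ)⁻¹) (fun k _ _ => (Fintype.card (A k.1) : ℝ)⁻¹)
      (fun k _ _ => Prest k) (fun _ => by positivity) (by simp [hcard'])
      (fun _ _ => isProbDist_uniform) (fun k _ _ => hPrest k) fun _ _ => rfl⟩

theorem of_first {S : Finset ι} (hS : 2 ≤ S.card) {k : ι} (hk : k ∈ S)
    (f : X k → A k → ℝ) (hf : ∀ xk, IsProbDist (f xk))
    (R : X k → A k → Corr X A (S.erase k)) (hR : ∀ xk ak, IsCausal X A (S.erase k) (R xk ak))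
    {P : Corr X A S} (hP : ∀ x a, P x a = f (x ⟨k, hk⟩) (a ⟨k, hk⟩) *
      R (x ⟨k, hk⟩) (a ⟨k, hk⟩) (restr (erase_sub S k) x) (restr (erase_sub S k) a)) :
    IsCausal X A S P := by
  have hrest (k' : {j // j ∈ S}) : ∃ P, IsCausal X A (S.erase k'.1) P :=
    exists_of_nonempty (by rw [← card_pos, card_erase_of_mem k'.2]; omega)
  choose Prest hPrest using hrest
  let k₀ : {j // j ∈ S} := ⟨k, hk⟩
  refine .step S hS P (fun k' => if k' = k₀ then 1 else 0)
    (Function.update (fun k' _ _ => (Fintype.card (A k'.1) : ℝ)⁻¹) k₀ f)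
    (Function.update (fun k' _ _ => Prest k') k₀ R) (fun _ => by positivity) (by simp [k₀])
    (fun k' => ?_) (fun k' => ?_) fun x a => ?_
  · by_cases h : k' = k₀
    · subst h; simpa using hf
    · simpa [h] using fun _ => isProbDist_uniform
  · by_cases h : k' = k₀
    · subst h; simpa using hR
    · simpa [h] using fun _ => hPrest k'
  · rw [sum_eq_single_of_mem k₀ (mem_attach _ _) fun k' _ h => by simp [h], hP]
    simp [k₀]

end IsCausal

abbrev X9 : Fin 3 → Type := fun _ => Bool

instance A9.instNonempty : (i : Fin 3) → Nonempty (A9 i)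
  | ⟨0, _⟩ => inferInstanceAs (Nonempty Unit)
  | ⟨1, _⟩ => inferInstanceAs (Nonempty Bool)
  | ⟨_ + 2, _⟩ => inferInstanceAs (Nonempty Bool)

section Causality

/-- `A_2` acts first and outputs `0`; `A_3` then outputs `x_2`. -/
def Q23 : Corr X9 A9 (univ.erase 0) := fun x a =>
  if a ⟨1, by decide⟩ = false ∧ a ⟨2, by decide⟩ = x ⟨1, by decide⟩ then 1 else 0

/-- `A_3` acts first and outputs `0`; `A_2` then outputs `x_3`. -/
def Q32 : Corr X9 A9 (univ.erase 0) := fun x a =>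
  if a ⟨1, by decide⟩ = x ⟨2, by decide⟩ ∧ a ⟨2, by decide⟩ = false then 1 else 0

theorem isCausal_Q23 : IsCausal X9 A9 (univ.erase 0) Q23 :=
  .of_first (by decide) (k := 1) (by decide) (fun _ c => if c = false then 1 else 0)
    (fun _ => isProbDist_ite_eq (α := Bool) false)
    (fun x₂ _ _ a => if a ⟨2, by decide⟩ = x₂ then 1 else 0)
    (fun x₂ _ => .of_eq_singleton (k := 2) (by decide) (by decide)
      (fun _ c => if c = x₂ then 1 else 0) (fun _ => isProbDist_ite_eq (α := Bool) x₂)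
      fun _ _ => rfl)
    fun x a => by rw [ite_zero_mul_ite_zero, one_mul]; rfl

theorem isCausal_Q32 : IsCausal X9 A9 (univ.erase 0) Q32 :=
  .of_first (by decide) (k := 2) (by decide) (fun _ c => if c = false then 1 else 0)
    (fun _ => isProbDist_ite_eq (α := Bool) false)
    (fun x₃ _ _ a => if a ⟨1, by decide⟩ = x₃ then 1 else 0)
    (fun x₃ _ => .of_eq_singleton (k := 1) (by decide) (by decide)
      (fun _ c => if c = x₃ then 1 else 0) (fun _ => isProbDist_ite_eq (α := Bool) x₃)
      fun _ _ => rfl)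
    fun x a => by rw [mul_comm, ite_zero_mul_ite_zero, one_mul]; rfl

theorem isCausal_P9 {q0 q1 : ℝ} (h0 : 0 ≤ q0) (h0' : q0 ≤ 1) (h1 : 0 ≤ q1) (h1' : q1 ≤ 1) :
    IsCausal X9 A9 univ (P9 q0 q1) := by
  let r : Bool → ℝ := fun x₁ => if x₁ = false then q0 else q1
  have hr x₁ : 0 ≤ r x₁ ∧ r x₁ ≤ 1 := by cases x₁ <;> simp [r, *]
  refine .of_first (by decide) (k := 0) (mem_univ 0) (fun _ _ => 1)
    (fun _ => ⟨fun _ => zero_le_one, Fintype.sum_unique (ι := Unit) _⟩)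
    (fun x₁ _ y b => r x₁ * Q23 y b + (1 - r x₁) * Q32 y b)
    (fun x₁ _ => isCausal_Q23.mix isCausal_Q32 (hr x₁).1 (hr x₁).2) fun x a => ?_
  rw [one_mul]
  by_cases h : x ⟨0, mem_univ 0⟩ = false <;> simp only [P9, r, h, if_true] <;> rfl

end Causality

section SeqProd

variable {N : ℕ} {B : Fin N → Type}

def seqProd (K : (j : Fin N) → ((i : Fin N) → i < j → B i) → B j → ℝ) (b : (j : Fin N) → B j) :
    ℝ :=
  ∏ j, K j (fun i _ => b i) (b j)

theorem seqProd_nonneg {K : (j : Fin N) → ((i : Fin N) → i < j → B i) → B j → ℝ}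
    (hK : ∀ j h c, 0 ≤ K j h c) (b : (j : Fin N) → B j) : 0 ≤ seqProd K b :=
  prod_nonneg fun j _ => hK j _ _

variable [∀ j, Fintype (B j)]

theorem sum_seqProd {K : (j : Fin N) → ((i : Fin N) → i < j → B i) → B j → ℝ}
    (hK : ∀ j h, ∑ c, K j h c = 1) : ∑ b, seqProd K b = 1 := by
  induction N with
  | zero => simp [seqProd]
  | succ n ih =>
    rw [← (Fin.consEquiv B).sum_comp, Fintype.sum_prod_type]
    refine (sum_congr rfl fun c _ => ?_).trans (hK 0 fun i hi => absurd hi i.not_lt_zero)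
    -- Given the first coordinate `c`, the remaining coordinates follow the shifted kernels.
    let K' (j : Fin n) (h : (i : Fin n) → i < j → B i.succ) : B j.succ → ℝ :=
      K j.succ fun i hi => Fin.cases (motive := fun i => i < j.succ → B i) (fun _ => c)
        (fun i hi => h i (Fin.succ_lt_succ_iff.mp hi)) i hi
    have hfirst (t : (i : Fin n) → B i.succ) :
        seqProd K (Fin.consEquiv B (c, t)) = K 0 (fun i hi => absurd hi i.not_lt_zero) c *
          seqProd K' t := by
      rw [seqProd, Fin.prod_univ_succ]
      congr 1
      · exact congrArg₂ _ (funext fun i => funext fun hi => absurd hi i.not_lt_zero) rfl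
      · refine prod_congr rfl fun j _ => congrArg₂ _ ?_ rfl
        funext i hi
        cases i using Fin.cases <;> rfl
    rw [sum_congr rfl fun t _ => hfirst t, ← mul_sum, ih fun j h => hK _ _, mul_one]

theorem sum_seqProd_update {K : (j : Fin N) → ((i : Fin N) → i < j → B i) → B j → ℝ}
    (hK : ∀ j h, ∑ c, K j h c = 1) (b : (j : Fin N) → B j) {k : Fin N}
    (hlater : ∀ j, k < j → Subsingleton (B j)) :
    ∑ c, seqProd K (Function.update b k c) = ∏ j with j < k, K j (fun i _ => b i) (b j) := by
  have hsplit (c : B k) : seqProd K (Function.update b k c) =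
      (∏ j with j < k, K j (fun i _ => b i) (b j)) * K k (fun i _ => b i) c := by
    calc seqProd K (Function.update b k c)
        = ∏ j, if j < k then K j (fun i _ => b i) (b j)
            else if j = k then K k (fun i _ => b i) c else 1 := by
          refine prod_congr rfl fun j _ => ?_
          rcases lt_trichotomy j k with hjk | rfl | hkj
          · rw [if_pos hjk, Function.update_of_ne hjk.ne]
            congr 1
            funext i hi
            exact Function.update_of_ne (hi.trans hjk).ne _ _
          · rw [if_neg (lt_irrefl j), if_pos rfl, Function.update_self]
            congr 1
            funext i hi
            exact Function.update_of_ne hi.ne _ _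
          · have := hlater j hkj
            rw [if_neg (not_lt_of_gt hkj), if_neg hkj.ne',
              ← hK j fun i _ => Function.update b k c i,
              Fintype.sum_subsingleton _ (Function.update b k c j)]
      _ = _ := by
          rw [prod_ite, prod_ite_eq']
          simp
  simp_rw [hsplit, ← mul_sum, hK, mul_one]

end SeqProd

namespace CompatibleWithOrder

variable {N : ℕ} {X A : Fin N → Type} [∀ i, Fintype (A i)] {σ : Equiv.Perm (Fin N)}
  {P : Corr X A univ}

theorem isProbDist (hP : CompatibleWithOrder X A σ P) (x : (i : {j // j ∈ univ}) → X i.1) :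
    IsProbDist (P x) := by
  obtain ⟨Pc, hPc0, hPc1, hPeq⟩ := hP
  let K (j : Fin N) := Pc j fun i _ => x ⟨σ i, mem_univ _⟩
  have hseq a : P x a = seqProd K fun j => a ⟨σ j, mem_univ _⟩ := hPeq x a
  refine ⟨fun a => hseq a ▸ seqProd_nonneg (fun j => hPc0 j _) _, ?_⟩
  let e := Equiv.piCongrLeft' (fun i : {j // j ∈ univ} => A i.1)
    ((Equiv.subtypeUnivEquiv mem_univ).trans σ.symm)
  rw [Fintype.sum_equiv e _ (seqProd K) hseq]
  exact sum_seqProd fun j => hPc1 j _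

theorem sum_update_eq (hP : CompatibleWithOrder X A σ P) {p : Fin N}
    (hlater : ∀ j, σ.symm p < j → Subsingleton (A (σ j)))
    {x x' : (i : {j // j ∈ univ}) → X i.1} (hx : ∀ i, i.1 ≠ p → x i = x' i)
    (a : (i : {j // j ∈ univ}) → A i.1) :
    ∑ c : A p, P x (Function.update a ⟨p, mem_univ p⟩ c) =
      ∑ c : A p, P x' (Function.update a ⟨p, mem_univ p⟩ c) := by
  obtain ⟨Pc, -, hPc1, hPeq⟩ := hP
  obtain ⟨k, rfl⟩ := σ.surjective p
  rw [σ.symm_apply_apply] at hlater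
  have hinj : Function.Injective fun j : Fin N => (⟨σ j, mem_univ _⟩ : {j // j ∈ univ}) :=
    fun _ _ h => σ.injective (congrArg Subtype.val h)
  have hmarg (x : (i : {j // j ∈ univ}) → X i.1) :
      ∑ c : A (σ k), P x (Function.update a ⟨σ k, mem_univ _⟩ c) =
        ∏ j with j < k, Pc j (fun i _ => x ⟨σ i, mem_univ _⟩) (fun i _ => a ⟨σ i, mem_univ _⟩)
          (a ⟨σ j, mem_univ _⟩) := by
    refine (sum_congr rfl fun c _ => ?_).trans
      (sum_seqProd_update (K := fun j => Pc j fun i _ => x ⟨σ i, mem_univ _⟩)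
        (fun j => hPc1 j _) (fun j => a ⟨σ j, mem_univ _⟩) hlater)
    rw [hPeq, seqProd, ← Function.update_comp_eq_of_injective' a hinj]
  rw [hmarg, hmarg]
  refine prod_congr rfl fun j hj => ?_
  congr 1
  funext i hi
  exact hx _ fun h => (lt_of_le_of_lt hi (mem_filter.mp hj).2).ne (σ.injective h)

end CompatibleWithOrder

theorem IsProbDist.sum_comp_le_one {α β : Type} [Fintype α] [Fintype β] {p : α → ℝ}
    (hp : IsProbDist p) {g : β → α} (hg : Function.Injective g) : ∑ b, p (g b) ≤ 1 := by
  classical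
  rw [← sum_image hg.injOn, ← hp.2]
  exact sum_le_univ_sum_of_nonneg hp.1

theorem sum_mul_le_sum_filter {κ : Type} [Fintype κ] (p : κ → Prop) [DecidablePred p]
    {w f g : κ → ℝ} (hw : ∀ m, 0 ≤ w m) (hf : ∀ m, p m → f m ≤ 1) (hg : ∀ m, 0 ≤ g m)
    (hfg : ∀ m, ¬ p m → f m = g m) (hg0 : ∑ m, w m * g m = 0) :
    ∑ m, w m * f m ≤ ∑ m with p m, w m := by
  have hzero : ∀ m, w m * g m = 0 :=
    fun m => (sum_eq_zero_iff_of_nonneg fun m _ => mul_nonneg (hw m) (hg m)).mp hg0 m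
      (mem_univ m)
  calc ∑ m, w m * f m = ∑ m with p m, w m * f m + ∑ m with ¬ p m, w m * f m :=
        (sum_filter_add_sum_filter_not univ p _).symm
    _ = ∑ m with p m, w m * f m := add_eq_left.mpr <| sum_eq_zero fun m hm => by
        rw [hfg m (mem_filter.mp hm).2, hzero m]
    _ ≤ ∑ m with p m, w m := sum_le_sum fun m hm =>
        mul_le_of_le_one_right (hw m) (hf m (mem_filter.mp hm).2)

section Marginals

def input9 (x₁ x₂ x₃ : Bool) : (i : {j // j ∈ (univ : Finset (Fin 3))}) → X9 i.1 :=
  fun i => ![x₁, x₂, x₃] i.1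

def output9 (a₂ a₃ : Bool) : (i : {j // j ∈ (univ : Finset (Fin 3))}) → A9 i.1
  | ⟨⟨0, _⟩, _⟩ => ()
  | ⟨⟨1, _⟩, _⟩ => a₂
  | ⟨⟨_ + 2, _⟩, _⟩ => a₃

/-- The probability that `A_2` (party `1`) outputs `1`. -/
def probA2 (P : Corr X9 A9 univ) (x : (i : {j // j ∈ univ}) → X9 i.1) : ℝ :=
  ∑ c : A9 2, P x (Function.update (output9 true true) ⟨2, mem_univ 2⟩ c)

/-- The probability that `A_3` (party `2`) outputs `1`. -/
def probA3 (P : Corr X9 A9 univ) (x : (i : {j // j ∈ univ}) → X9 i.1) : ℝ :=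
  ∑ c : A9 1, P x (Function.update (output9 true true) ⟨1, mem_univ 1⟩ c)

theorem update_output9_one (a₂ a₃ c : Bool) :
    Function.update (output9 a₂ a₃) ⟨1, mem_univ 1⟩ c = output9 c a₃ := by
  funext ⟨i, hi⟩
  fin_cases i <;> rfl

theorem update_output9_two (a₂ a₃ c : Bool) :
    Function.update (output9 a₂ a₃) ⟨2, mem_univ 2⟩ c = output9 a₂ c := by
  funext ⟨i, hi⟩
  fin_cases i <;> rfl

theorem probA2_eq (P : Corr X9 A9 univ) (x : (i : {j // j ∈ univ}) → X9 i.1) :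
    probA2 P x = P x (output9 true false) + P x (output9 true true) := by
  show ∑ c : Bool, _ = _
  simp only [Fintype.sum_bool, update_output9_two, add_comm]

theorem probA3_eq (P : Corr X9 A9 univ) (x : (i : {j // j ∈ univ}) → X9 i.1) :
    probA3 P x = P x (output9 false true) + P x (output9 true true) := by
  show ∑ c : Bool, _ = _
  simp only [Fintype.sum_bool, update_output9_one, add_comm]

variable (q0 q1 : ℝ)

theorem probA3_P9_true (x₁ x₃ : Bool) :
    probA3 (P9 q0 q1) (input9 x₁ true x₃) = if x₁ = false then q0 else q1 := by
  cases x₁ <;> cases x₃ <;> simp +decide [probA3_eq, P9]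

theorem probA3_P9_false (x₁ x₃ : Bool) : probA3 (P9 q0 q1) (input9 x₁ false x₃) = 0 := by
  cases x₁ <;> cases x₃ <;> simp +decide [probA3_eq, P9]

theorem probA2_P9_true (x₁ x₂ : Bool) :
    probA2 (P9 q0 q1) (input9 x₁ x₂ true) = 1 - if x₁ = false then q0 else q1 := by
  cases x₁ <;> cases x₂ <;> simp +decide [probA2_eq, P9]

theorem probA2_P9_false (x₁ x₂ : Bool) : probA2 (P9 q0 q1) (input9 x₁ x₂ false) = 0 := by
  cases x₁ <;> cases x₂ <;> simp +decide [probA2_eq, P9]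

end Marginals

theorem subsingleton_A9_of_lt {σ : Equiv.Perm (Fin 3)} {p l : Fin 3} (hp : p ≠ 0) (hl : l ≠ 0)
    (hlp : σ.symm l < σ.symm p) (j : Fin 3) (hj : σ.symm p < j) : Subsingleton (A9 (σ j)) := by
  have hjp : σ j ≠ p := fun h => hj.ne (by rw [← h, σ.symm_apply_apply])
  have hjl : σ j ≠ l := fun h => (hlp.trans hj).ne (by rw [← h, σ.symm_apply_apply])
  have hpl : p ≠ l := fun h => hlp.ne (by rw [h])
  have : σ j = 0 := by omega
  rw [this]
  exact inferInstanceAs (Subsingleton Unit)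

namespace CompatibleWithOrder

variable {σ : Equiv.Perm (Fin 3)} {P : Corr X9 A9 univ}

theorem probA2_input9_eq (hP : CompatibleWithOrder X9 A9 σ P) (h : σ.symm 1 < σ.symm 2)
    (x₁ x₂ x₃ x₃' : Bool) : probA2 P (input9 x₁ x₂ x₃) = probA2 P (input9 x₁ x₂ x₃') :=
  hP.sum_update_eq (subsingleton_A9_of_lt (by decide) (by decide) h)
    (fun ⟨i, _⟩ => by fin_cases i <;> simp [input9]) _

theorem probA3_input9_eq (hP : CompatibleWithOrder X9 A9 σ P) (h : σ.symm 2 < σ.symm 1)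
    (x₁ x₂ x₂' x₃ : Bool) : probA3 P (input9 x₁ x₂ x₃) = probA3 P (input9 x₁ x₂' x₃) :=
  hP.sum_update_eq (subsingleton_A9_of_lt (by decide) (by decide) h)
    (fun ⟨i, _⟩ => by fin_cases i <;> simp [input9]) _

end CompatibleWithOrder

theorem P9_not_mixture_of_fixed_orders {q0 q1 : ℝ} (hne : q0 ≠ q1) :
    ¬ ∃ (M : ℕ) (w : Fin M → ℝ) (Ps : Fin M → Corr X9 A9 univ) (σs : Fin M → Equiv.Perm (Fin 3)),
        (∀ m, 0 ≤ w m) ∧ (∑ m, w m = 1) ∧ (∀ m, CompatibleWithOrder X9 A9 (σs m) (Ps m)) ∧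
        (∀ x a, P9 q0 q1 x a = ∑ m, w m * Ps m x a) := by
  rintro ⟨M, w, Ps, σs, hw, hw1, hcomp, hmix⟩
  have hmixA2 x : probA2 (P9 q0 q1) x = ∑ m, w m * probA2 (Ps m) x := by
    simp only [probA2, hmix, mul_sum]; exact sum_comm
  have hmixA3 x : probA3 (P9 q0 q1) x = ∑ m, w m * probA3 (Ps m) x := by
    simp only [probA3, hmix, mul_sum]; exact sum_comm
  have hprob m x := (hcomp m).isProbDist x
  let before (m : Fin M) : Prop := (σs m).symm 1 < (σs m).symm 2
  have hafter m (hm : ¬ before m) : (σs m).symm 2 < (σs m).symm 1 :=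
    lt_of_le_of_ne (not_lt.mp hm) ((σs m).symm.injective.ne (by decide))
  have hweight (x₁ : Bool) : (if x₁ = false then q0 else q1) = ∑ m with before m, w m := by
    have hle : (if x₁ = false then q0 else q1) ≤ ∑ m with before m, w m := by
      rw [← probA3_P9_true q0 q1 x₁ false, hmixA3]
      refine sum_mul_le_sum_filter before hw
        (fun m _ => (hprob m _).sum_comp_le_one (Function.update_injective _ _))
        (g := fun m => probA3 (Ps m) (input9 x₁ false false))
        (fun m => sum_nonneg fun c _ => (hprob m _).1 _)
        (fun m hm => (hcomp m).probA3_input9_eq (hafter m hm) ..)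
        (by rw [← hmixA3, probA3_P9_false])
    have hge : 1 - (if x₁ = false then q0 else q1) ≤ ∑ m with ¬ before m, w m := by
      rw [← probA2_P9_true q0 q1 x₁ false, hmixA2]
      refine sum_mul_le_sum_filter (¬ before ·) hw
        (fun m _ => (hprob m _).sum_comp_le_one (Function.update_injective _ _))
        (g := fun m => probA2 (Ps m) (input9 x₁ false false))
        (fun m => sum_nonneg fun c _ => (hprob m _).1 _)
        (fun m hm => (hcomp m).probA2_input9_eq (not_not.mp hm) ..)
        (by rw [← hmixA2, probA2_P9_false])
    have := sum_filter_add_sum_filter_not univ before w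
    linarith
  exact hne (by simpa using (hweight false).trans (hweight true).symm)

/-- for `0 < q_0, q_1 < 1` with `q_0 ≠ q_1`, the correlation of Eq. (8) is
causal, but it is not a probabilistic mixture of fixed-order causal correlations. -/
theorem probabilistic_dynamical_example_causal_but_not_mixture_of_fixed_orders
    (q0 q1 : ℝ) (h00 : 0 < q0) (h01 : q0 < 1) (h10 : 0 < q1) (h11 : q1 < 1) (hne : q0 ≠ q1) :
    IsCausal (fun _ : Fin 3 => Bool) A9 Finset.univ (P9 q0 q1) ∧
    ¬ ∃ (M : ℕ) (w : Fin M → ℝ) (Ps : Fin M → Corr (fun _ : Fin 3 => Bool) A9 Finset.univ)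
        (σs : Fin M → Equiv.Perm (Fin 3)),
        (∀ m, 0 ≤ w m) ∧ (∑ m, w m = 1) ∧
        (∀ m, CompatibleWithOrder (fun _ : Fin 3 => Bool) A9 (σs m) (Ps m)) ∧
        (∀ x a, P9 q0 q1 x a = ∑ m, w m * Ps m x a) :=
  ⟨isCausal_P9 h00.le h01.le h10.le h11.le, P9_not_mixture_of_fixed_orders hne⟩
end

section
/- Let P be a deterministic causal N-partite correlation, i.e., P(a|x) = δ_{a,α(x)} for some function α from input lists to output lists, and suppose P is causal. Then for each input list x there exist N nested subsets K_1 ⊂ K_2 ⊂ … ⊂ K_N = {1,…,N} with |K_j| = j for each j, such that for every j = 1,…,N, the marginal distribution of the outputs of the parties in K_j, Σ_{a_{N∖K_j}} P(a|x'), takes the same value for every input list x' that agrees with x on the inputs of the parties in K_j (i.e., the marginal for the parties in K_j depends only on x_{K_j}). -/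
/-!
Take a party `k` carrying positive weight in the causal decomposition of a deterministic
correlation `P`. Since `1 = P(α x | x)` is a convex combination of products of probabilities,
each product with positive weight is `1`: the output of `k` is then a function of `x_k` alone,
and, for fixed `x_k`, the correlation of the remaining parties is again deterministic and causal.
By induction the parties can be listed so that the outputs of each initial segment depend only on
the inputs of that segment. Finally, the marginal of a deterministic correlation on a set `K` is
the indicator of `α(x)` restricted to `K`, so it depends on `x` only through these outputs.
-/

namespace IsProbDist

variable {α : Type} [Fintype α] {p : α → ℝ}

theorem le_one (hp : IsProbDist p) (a : α) : p a ≤ 1 :=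
  hp.2 ▸ Finset.single_le_sum (fun i _ => hp.1 i) (Finset.mem_univ a)

theorem eq_ite_of_eq_one [DecidableEq α] (hp : IsProbDist p) {b : α} (hb : p b = 1) (a : α) :
    p a = if a = b then 1 else 0 := by
  split_ifs with hab
  · rw [hab, hb]
  · have hpair := Finset.sum_le_sum_of_subset_of_nonneg (Finset.subset_univ {a, b})
      (fun i _ _ => hp.1 i)
    rw [Finset.sum_pair hab, hb, hp.2] at hpair
    linarith [hp.1 a]

theorem eq_of_eq_one [DecidableEq α] (hp : IsProbDist p) {a b : α} (ha : p a = 1)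
    (hb : p b = 1) : a = b := by
  by_contra hab
  simp [hp.eq_ite_of_eq_one hb a, hab] at ha

end IsProbDist

theorem eq_one_of_convex_combination_eq_one {κ : Type} {s : Finset κ} {q t : κ → ℝ}
    (hq : ∀ k ∈ s, 0 ≤ q k) (hq1 : ∑ k ∈ s, q k = 1) (ht : ∀ k ∈ s, t k ≤ 1)
    (h : ∑ k ∈ s, q k * t k = 1) {k : κ} (hk : k ∈ s) (hqk : 0 < q k) : t k = 1 := by
  have hdefect : ∑ k ∈ s, q k * (1 - t k) = 0 := by
    simp only [mul_sub, Finset.sum_sub_distrib, mul_one, hq1, h, sub_self]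
  have hk0 := (Finset.sum_eq_zero_iff_of_nonneg
    (fun k hk => mul_nonneg (hq k hk) (sub_nonneg.mpr (ht k hk)))).mp hdefect k hk
  rcases mul_eq_zero.mp hk0 with h0 | h1
  · exact absurd h0 hqk.ne'
  · linarith

theorem eq_one_and_eq_one_of_mul_eq_one {a b : ℝ} (ha0 : 0 ≤ a) (ha1 : a ≤ 1) (hb0 : 0 ≤ b)
    (hb1 : b ≤ 1) (h : a * b = 1) : a = 1 ∧ b = 1 := by
  constructor <;> nlinarith

section Tuples

variable {ι : Type} [DecidableEq ι] {X : ι → Type}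

theorem ins_apply_self {S : Finset ι} {k : ι} (hk : k ∈ S) (xk : X k)
    (u : (i : {j // j ∈ S.erase k}) → X i.1) : ins hk xk u ⟨k, hk⟩ = xk := by
  simp [ins]

theorem restr_ins {S : Finset ι} {k : ι} (hk : k ∈ S) (xk : X k)
    (u : (i : {j // j ∈ S.erase k}) → X i.1) : restr (erase_sub S k) (ins hk xk u) = u := by
  funext i
  simp [restr, ins, (Finset.mem_erase.mp i.2).1]

theorem ins_restr {S : Finset ι} {k : ι} (hk : k ∈ S) (x : (i : {j // j ∈ S}) → X i.1) :
    ins hk (x ⟨k, hk⟩) (restr (erase_sub S k) x) = x := by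
  funext ⟨i, hi⟩
  by_cases h : i = k
  · subst h
    simp [ins]
  · simp [ins, h, restr]

def splitEquiv {S : Finset ι} {k : ι} (hk : k ∈ S) :
    ((i : {j // j ∈ S}) → X i.1) ≃ (X k × ((i : {j // j ∈ S.erase k}) → X i.1)) where
  toFun a := (a ⟨k, hk⟩, restr (erase_sub S k) a)
  invFun p := ins hk p.1 p.2
  left_inv a := ins_restr hk a
  right_inv p := Prod.ext (ins_apply_self hk p.1 p.2) (restr_ins hk p.1 p.2)

theorem sum_eq_sum_sum_restr_erase [∀ i, Fintype (X i)] {S : Finset ι} {k : ι} (hk : k ∈ S)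
    (F : X k → ((i : {j // j ∈ S.erase k}) → X i.1) → ℝ) :
    ∑ a : (i : {j // j ∈ S}) → X i.1, F (a ⟨k, hk⟩) (restr (erase_sub S k) a) =
      ∑ ak, ∑ u, F ak u := by
  rw [← Fintype.sum_prod_type']
  exact Fintype.sum_equiv (splitEquiv hk) _ (fun p => F p.1 p.2) (fun _ => rfl)

theorem glue_eq_iff {S K : Finset ι} (h : K ⊆ S) (u : (i : {j // j ∈ K}) → X i.1)
    (v : (i : {j // j ∈ S \ K}) → X i.1) (c : (i : {j // j ∈ S}) → X i.1) :
    glue h u v = c ↔ u = restr h c ∧ v = restr (sdiff_sub S K) c := by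
  constructor
  · rintro rfl
    constructor <;> funext ⟨i, hi⟩
    · simp [restr, glue, hi]
    · simp [restr, glue, (Finset.mem_sdiff.mp hi).2]
  · rintro ⟨rfl, rfl⟩
    funext i
    by_cases hi : i.1 ∈ K <;> simp [glue, restr, hi]

end Tuples

theorem List.monotone_toFinset_take {ι : Type} [DecidableEq ι] (l : List ι) :
    Monotone fun n => (l.take n).toFinset :=
  fun _ _ hmn _ hi =>
    List.mem_toFinset.mpr ((List.take_prefix_take_left hmn).subset (List.mem_toFinset.mp hi))

theorem List.Nodup.card_toFinset_take {ι : Type} [DecidableEq ι] {l : List ι} (hl : l.Nodup)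
    (n : ℕ) : (l.take n).toFinset.card = min n l.length := by
  rw [List.toFinset_card_of_nodup (hl.sublist (List.take_sublist n l)), List.length_take]

section Causal

variable {ι : Type} [DecidableEq ι] {X A : ι → Type} {S : Finset ι}

def IsDeterministic [∀ i, DecidableEq (A i)] (P : Corr X A S)
    (α : ((i : {j // j ∈ S}) → X i.1) → (i : {j // j ∈ S}) → A i.1) : Prop :=
  ∀ x a, P x a = if a = α x then 1 else 0

theorem IsDeterministic.sum_glue [∀ i, Fintype (A i)] [∀ i, DecidableEq (A i)]
    {P : Corr X A S} {α : ((i : {j // j ∈ S}) → X i.1) → (i : {j // j ∈ S}) → A i.1}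
    (hP : IsDeterministic P α) {K : Finset ι} (h : K ⊆ S) (x : (i : {j // j ∈ S}) → X i.1)
    (b : (i : {j // j ∈ K}) → A i.1) :
    ∑ v : (i : {j // j ∈ S \ K}) → A i.1, P x (glue h b v) =
      if b = restr h (α x) then 1 else 0 := by
  rw [Finset.sum_congr rfl fun v _ => hP x (glue h b v)]
  simp only [glue_eq_iff, ite_and]
  split_ifs <;> simp

theorem IsCausal.isProbDist [∀ i, Fintype (A i)] {P : Corr X A S} (hP : IsCausal X A S P)
    (x : (i : {j // j ∈ S}) → X i.1) : IsProbDist (P x) := by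
  induction hP with
  | base _ _ hprob => exact hprob x
  | step S _ P q Pfirst Prest hq hq1 hPfirst _ hmix ih =>
    refine ⟨fun a => ?_, ?_⟩
    · rw [hmix]
      exact Finset.sum_nonneg fun k _ =>
        mul_nonneg (mul_nonneg (hq k) ((hPfirst k _).1 _)) ((ih k _ _ _).1 _)
    · have hterm : ∀ k : {j // j ∈ S}, ∑ a : (i : {j // j ∈ S}) → A i.1,
          q k * Pfirst k (x k) (a k) *
            Prest k (x k) (a k) (restr (erase_sub S k.1) x) (restr (erase_sub S k.1) a) =
          q k := by
        rintro ⟨k, hk⟩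
        rw [sum_eq_sum_sum_restr_erase hk fun ak u => q ⟨k, hk⟩ * Pfirst ⟨k, hk⟩ (x ⟨k, hk⟩) ak *
          Prest ⟨k, hk⟩ (x ⟨k, hk⟩) ak (restr (erase_sub S k) x) u]
        have hrest : ∀ ak, ∑ u, Prest ⟨k, hk⟩ (x ⟨k, hk⟩) ak (restr (erase_sub S k) x) u = 1 :=
          fun ak => (ih _ _ ak _).2
        simp only [← Finset.mul_sum, hrest, mul_one, (hPfirst ⟨k, hk⟩ (x ⟨k, hk⟩)).2]
      simp only [hmix]
      rw [Finset.sum_comm, Finset.sum_congr rfl fun k _ => hterm k, hq1]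

/-- The sets `K_j` of the theorem are the prefixes of `l`. -/
def IsCausalOrderAt (α : ((i : {j // j ∈ S}) → X i.1) → (i : {j // j ∈ S}) → A i.1)
    (x : (i : {j // j ∈ S}) → X i.1) (l : List ι) : Prop :=
  l.Nodup ∧ l.toFinset = S ∧ ∀ (n : ℕ) (x' : (i : {j // j ∈ S}) → X i.1),
    (∀ i : {j // j ∈ S}, i.1 ∈ l.take n → x' i = x i) →
    ∀ i : {j // j ∈ S}, i.1 ∈ l.take n → α x' i = α x i

theorem isCausalOrderAt_singleton {k : ι}
    (α : ((i : {j // j ∈ ({k} : Finset ι)}) → X i.1) → (i : {j // j ∈ ({k} : Finset ι)}) → A i.1)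
    (x : (i : {j // j ∈ ({k} : Finset ι)}) → X i.1) : IsCausalOrderAt α x [k] := by
  refine ⟨List.nodup_singleton k, by simp, ?_⟩
  rintro (_ | n) x' hagree i hi
  · simp at hi
  · have hx' : x' = x := funext fun ⟨j, hj⟩ => hagree _ (by simp at hj; simp [hj])
    rw [hx']

theorem IsCausalOrderAt.cons {k : ι} (hk : k ∈ S)
    {α : ((i : {j // j ∈ S}) → X i.1) → (i : {j // j ∈ S}) → A i.1}
    {β : ((i : {j // j ∈ S.erase k}) → X i.1) → (i : {j // j ∈ S.erase k}) → A i.1}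
    {x : (i : {j // j ∈ S}) → X i.1} {l : List ι}
    (hl : IsCausalOrderAt β (restr (erase_sub S k) x) l)
    (hfirst : ∀ y, y ⟨k, hk⟩ = x ⟨k, hk⟩ → α y ⟨k, hk⟩ = α x ⟨k, hk⟩)
    (hrest : ∀ y, y ⟨k, hk⟩ = x ⟨k, hk⟩ →
      restr (erase_sub S k) (α y) = β (restr (erase_sub S k) y)) :
    IsCausalOrderAt α x (k :: l) := by
  obtain ⟨hnodup, hS, hprefix⟩ := hl
  have hkl : k ∉ l := fun h => by
    have hkS := List.mem_toFinset.mpr h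
    simp [hS] at hkS
  refine ⟨List.nodup_cons.mpr ⟨hkl, hnodup⟩, by rw [List.toFinset_cons, hS, Finset.insert_erase hk],
    ?_⟩
  rintro (_ | n) x' hagree ⟨i, hiS⟩ hi
  · simp at hi
  have hx'k : x' ⟨k, hk⟩ = x ⟨k, hk⟩ := hagree _ (by simp)
  rcases List.mem_cons.mp (List.take_succ_cons ▸ hi) with rfl | hi
  · exact hfirst x' hx'k
  have hie : i ∈ S.erase k := hS ▸ List.mem_toFinset.mpr (List.mem_of_mem_take hi)
  have hagree' : ∀ j : {j // j ∈ S.erase k}, j.1 ∈ l.take n →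
      restr (erase_sub S k) x' j = restr (erase_sub S k) x j :=
    fun j hj => hagree _ (by simp [hj])
  calc α x' ⟨i, hiS⟩ = β (restr (erase_sub S k) x') ⟨i, hie⟩ := congrFun (hrest x' hx'k) ⟨i, hie⟩
    _ = β (restr (erase_sub S k) x) ⟨i, hie⟩ := hprefix n _ hagree' _ hi
    _ = α x ⟨i, hiS⟩ := (congrFun (hrest x rfl) ⟨i, hie⟩).symm

theorem IsCausal.exists_isCausalOrderAt [∀ i, Fintype (A i)] [∀ i, DecidableEq (A i)]
    {P : Corr X A S} (hP : IsCausal X A S P) :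
    ∀ α, IsDeterministic P α → ∀ x, ∃ l, IsCausalOrderAt α x l := by
  induction hP with
  | base k _ _ => exact fun α _ x => ⟨[k], isCausalOrderAt_singleton α x⟩
  | step S _ P q Pfirst Prest hq hq1 hPfirst hPrest hmix ih =>
    intro α hα x
    obtain ⟨⟨k, hk⟩, -, hqk⟩ := Finset.exists_ne_zero_of_sum_ne_zero (hq1 ▸ one_ne_zero)
    have hone : ∀ y, Pfirst ⟨k, hk⟩ (y ⟨k, hk⟩) (α y ⟨k, hk⟩) = 1 ∧
        Prest ⟨k, hk⟩ (y ⟨k, hk⟩) (α y ⟨k, hk⟩) (restr (erase_sub S k) y)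
          (restr (erase_sub S k) (α y)) = 1 := by
      intro y
      have hF := hPfirst ⟨k, hk⟩ (y ⟨k, hk⟩)
      have hR := (hPrest ⟨k, hk⟩ (y ⟨k, hk⟩) (α y ⟨k, hk⟩)).isProbDist (restr (erase_sub S k) y)
      refine eq_one_and_eq_one_of_mul_eq_one (hF.1 _) (hF.le_one _) (hR.1 _) (hR.le_one _) ?_
      refine eq_one_of_convex_combination_eq_one (fun k' _ => hq k') hq1
        (t := fun k' => Pfirst k' (y k') (α y k') *
          Prest k' (y k') (α y k') (restr (erase_sub S k'.1) y) (restr (erase_sub S k'.1) (α y)))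
        (fun k' _ => mul_le_one₀ ((hPfirst k' _).le_one _)
          (((hPrest k' _ _).isProbDist _).1 _) (((hPrest k' _ _).isProbDist _).le_one _))
        ?_ (Finset.mem_attach _ _) ((hq _).lt_of_ne' hqk)
      simpa only [mul_assoc, hα y (α y), if_pos] using (hmix y (α y)).symm
    have hfirst : ∀ y, y ⟨k, hk⟩ = x ⟨k, hk⟩ → α y ⟨k, hk⟩ = α x ⟨k, hk⟩ := fun y hy =>
      (hPfirst ⟨k, hk⟩ (x ⟨k, hk⟩)).eq_of_eq_one (hy ▸ (hone y).1) (hone x).1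
    let β u := restr (erase_sub S k) (α (ins hk (x ⟨k, hk⟩) u))
    have hrest : ∀ y, y ⟨k, hk⟩ = x ⟨k, hk⟩ →
        restr (erase_sub S k) (α y) = β (restr (erase_sub S k) y) := fun y hy => by
      simp only [β, ← hy, ins_restr]
    have hβ : IsDeterministic (Prest ⟨k, hk⟩ (x ⟨k, hk⟩) (α x ⟨k, hk⟩)) β := fun u a => by
      have hy := ins_apply_self hk (x ⟨k, hk⟩) u
      have h := (hone (ins hk (x ⟨k, hk⟩) u)).2
      rw [hy, hfirst _ hy, hrest _ hy, restr_ins] at h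
      exact ((hPrest _ _ _).isProbDist u).eq_ite_of_eq_one h a
    obtain ⟨l, hl⟩ := ih ⟨k, hk⟩ _ _ β hβ (restr (erase_sub S k) x)
    exact ⟨k :: l, hl.cons hk hfirst hrest⟩

end Causal

/-- for a deterministic causal correlation, each input list `x` determines a
chain of nested subsets of parties `K_1 ⊂ K_2 ⊂ … ⊂ K_N` with `|K_j| = j` (a causal order
realized on input `x`), such that the marginal distribution for the parties in `K_j` depends
only on the inputs of the parties in `K_j`. -/
theorem deterministic_causal_nested_subsets (N : ℕ) (X A : Fin N → Type)
    [∀ i, Fintype (A i)] [∀ i, DecidableEq (A i)]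
    (P : Corr X A Finset.univ)
    (α : ((i : {j // j ∈ (Finset.univ : Finset (Fin N))}) → X i.1) →
         ((i : {j // j ∈ (Finset.univ : Finset (Fin N))}) → A i.1))
    (hdet : ∀ x a, P x a = if a = α x then (1 : ℝ) else 0)
    (hP : IsCausal X A Finset.univ P)
    (x : (i : {j // j ∈ (Finset.univ : Finset (Fin N))}) → X i.1) :
    ∃ K : Fin N → Finset (Fin N),
      (∀ j : Fin N, (K j).card = j.1 + 1) ∧ StrictMono K ∧
      ∀ (j : Fin N) (x' : (i : {j' // j' ∈ (Finset.univ : Finset (Fin N))}) → X i.1),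
        (∀ i : {j' // j' ∈ (Finset.univ : Finset (Fin N))}, i.1 ∈ K j → x' i = x i) →
        ∀ b : (i : {j' // j' ∈ K j}) → A i.1,
          (∑ v : (i : {j' // j' ∈ Finset.univ \ K j}) → A i.1,
              P x' (glue (Finset.subset_univ (K j)) b v)) =
          (∑ v : (i : {j' // j' ∈ Finset.univ \ K j}) → A i.1,
              P x (glue (Finset.subset_univ (K j)) b v)) := by
  obtain ⟨l, hnodup, huniv, hprefix⟩ := hP.exists_isCausalOrderAt α hdet x
  have hlen : l.length = N := by
    rw [← List.toFinset_card_of_nodup hnodup, huniv, Finset.card_univ, Fintype.card_fin]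
  have hcard : ∀ j : Fin N, (l.take (j.1 + 1)).toFinset.card = j.1 + 1 := fun j => by
    rw [hnodup.card_toFinset_take, hlen]
    omega
  refine ⟨fun j => (l.take (j.1 + 1)).toFinset, hcard, ?_, fun j x' hx' b => ?_⟩
  · refine Monotone.strictMono_of_injective
      (fun i j hij => l.monotone_toFinset_take (by simpa using hij)) fun i j hij => ?_
    have := congrArg Finset.card hij
    simp only [hcard] at this
    exact Fin.ext (by omega)
  · have hα : restr (Finset.subset_univ (l.take (j.1 + 1)).toFinset) (α x') =
        restr (Finset.subset_univ (l.take (j.1 + 1)).toFinset) (α x) :=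
      funext fun i => hprefix _ x' (fun i' hi' => hx' i' (List.mem_toFinset.mpr hi'))
        ⟨i.1, Finset.mem_univ _⟩ (List.mem_toFinset.mp i.2)
    rw [IsDeterministic.sum_glue hdet, IsDeterministic.sum_glue hdet, hα]
end
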